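/- For any tree grammar G' of order n such that no word in its ε-adjusted frontier language contains the symbol e, there exists a word grammar G of order at most n+1 with W(G) = L_leaf^ε(G'). Concretely, G is obtained by replacing each nullary terminal a ≠ e by a unary terminal, replacing e by a non-terminal E : o → o with rule E x → x, replacing the binary terminal br by a non-terminal Br : (o→o)→(o→o)→(o→o) with rule Br f g x → f (g x), η-expanding every rule with a fresh order-0 argument, and adding a new start symbol S'' with rule S'' → S e. -/

import Mathlib

/-- Sorts (simple types): κ ::= o | κ₁ → κ₂. -/
inductive STy where
  | o : STy
  | arr : STy → STy → STy
deriving DecidableEq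

/-- ord(o)=0, ord(κ₁→κ₂)=max(ord κ₁ + 1, ord κ₂). -/
def STy.ord : STy → Nat
  | .o => 0
  | .arr a b => max (a.ord + 1) b.ord

/-- The list of argument sorts of a sort. -/
def STy.args : STy → List STy
  | .o => []
  | .arr a b => a :: b.args

/-- The sort o → ⋯ → o → o with n arguments (sort of an arity-n terminal). -/
def tyOfArity : Nat → STy
  | 0 => .o
  | n + 1 => .arr .o (tyOfArity n)

/-- Applicative terms over non-terminals `N` and terminals `T`,
    with variables named by natural numbers. -/
inductive Tm (N T : Type) where
  | var : Nat → Tm N T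
  | nt : N → Tm N T
  | tm : T → Tm N T
  | app : Tm N T → Tm N T → Tm N T
deriving DecidableEq

/-- Simultaneous substitution of the terms `ts` for the variables 0,…,k−1. -/
def substL {N T : Type} (ts : List (Tm N T)) : Tm N T → Tm N T
  | .var n => ts.getD n (.var n)
  | .nt A => .nt A
  | .tm a => .tm a
  | .app s t => .app (substL ts s) (substL ts t)

/-- Simple typing of applicative terms: terminals of arity k have sort o^k → o. -/
inductive HasTy {N T : Type} (ar : T → Nat) (nty : N → STy) :
    List STy → Tm N T → STy → Prop where
  | var {Γ n κ} : Γ[n]? = some κ → HasTy ar nty Γ (.var n) κ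
  | nt {Γ A} : HasTy ar nty Γ (.nt A) (nty A)
  | tm {Γ a} : HasTy ar nty Γ (.tm a) (tyOfArity (ar a))
  | app {Γ s t κ₁ κ₂} : HasTy ar nty Γ s (.arr κ₁ κ₂) → HasTy ar nty Γ t κ₁ →
      HasTy ar nty Γ (.app s t) κ₂

/-- A higher-order grammar over terminals `T` with arities `ar`: finitely many
    sorted non-terminals, a base-sort start symbol, and for each non-terminal a
    finite set of rule bodies `t` (the rule being A x₁ ⋯ x_k → t), each
    well-typed of base sort under the parameter sorts of A. -/
structure Grammar (T : Type) (ar : T → Nat) where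
  N : Type
  nFin : Finite N
  nty : N → STy
  start : N
  startO : nty start = .o
  rules : N → List (Tm N T)
  rulesTy : ∀ A t, t ∈ rules A → HasTy ar nty (nty A).args t .o

/-- Iterated application to a list of arguments. -/
def appList {N T : Type} : Tm N T → List (Tm N T) → Tm N T
  | s, [] => s
  | s, t :: ts => appList (.app s t) ts

/-- One-step rewriting: a fully applied non-terminal is rewritten by one of its
    rules, and reduction is allowed in the arguments of a terminal. -/
inductive Red {T : Type} {ar : T → Nat} (G : Grammar T ar) :
    Tm G.N T → Tm G.N T → Prop where
  | step {A body ts} : body ∈ G.rules A → ts.length = (G.nty A).args.length →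
      Red G (appList (.nt A) ts) (substL ts body)
  | ctx {a t t' ts₁ ts₂} : Red G t t' → ts₁.length + 1 + ts₂.length = ar a →
      Red G (appList (.tm a) (ts₁ ++ t :: ts₂)) (appList (.tm a) (ts₁ ++ t' :: ts₂))

/-- Many-step reduction. -/
def RedStar {T : Type} {ar : T → Nat} (G : Grammar T ar) :
    Tm G.N T → Tm G.N T → Prop :=
  Relation.ReflTransGen (Red G)

/-- The grammar has order at most n. -/
def Grammar.orderLE {T : Type} {ar : T → Nat} (G : Grammar T ar) (n : Nat) : Prop :=
  ∀ A, (G.nty A).ord ≤ n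

/-- Terminal alphabet of word grammars: `some a` has arity 1, `none` is the
    end-of-word symbol e of arity 0. -/
def wordAr {β : Type} : Option β → Nat
  | none => 0
  | some _ => 1

/-- The term a₁(⋯(a_n e)⋯) representing the word a₁⋯a_n. -/
def wordTm {N β : Type} : List β → Tm N (Option β)
  | [] => .tm none
  | a :: w => .app (.tm (some a)) (wordTm w)

/-- The word language of a word grammar. -/
def WordLang {β : Type} (G : Grammar (Option β) wordAr) : Set (List β) :=
  { w | RedStar G (.nt G.start) (wordTm w) }

/-- Terminal alphabet of tree grammars: a binary `br`, a nullary `e`, and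
    nullary letters from β. -/
inductive TSym (β : Type) where
  | br : TSym β
  | e : TSym β
  | ltr : β → TSym β
deriving DecidableEq

def treeAr {β : Type} : TSym β → Nat
  | .br => 2
  | .e => 0
  | .ltr _ => 0

/-- Trees over the alphabet {br, e} ∪ β. -/
inductive BT (β : Type) where
  | e : BT β
  | ltr : β → BT β
  | br : BT β → BT β → BT β
deriving DecidableEq

/-- A tree as an applicative term. -/
def BT.toTm {N β : Type} : BT β → Tm N (TSym β)
  | .e => .tm .e
  | .ltr a => .tm (.ltr a)
  | .br l r => .app (.app (.tm .br) l.toTm) r.toTm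

/-- The frontier word of a tree; `none` stands for the leaf symbol e. -/
def BT.leaves {β : Type} : BT β → List (Option β)
  | .e => [none]
  | .ltr a => [some a]
  | .br l r => l.leaves ++ r.leaves

/-- The frontier language of a tree grammar. -/
def LeafLang {β : Type} (G : Grammar (TSym β) treeAr) : Set (List (Option β)) :=
  { w | ∃ π : BT β, RedStar G (.nt G.start) π.toTm ∧ π.leaves = w }

/-- The ε-adjusted frontier language: the single-leaf word "e" counts as ε. -/
def LeafLangE {β : Type} (G : Grammar (TSym β) treeAr) : Set (List (Option β)) :=
  { w | w ∈ LeafLang G ∧ w ≠ [none] } ∪ { w | w = [] ∧ [none] ∈ LeafLang G }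

/-!
A tree over `br`, `e` and letters can be read as the function on words that prepends its
frontier: a letter `a` becomes the unary terminal `a`, `e` the identity `E x → x`, and `br`
composition `Br f g x → f (g x)`. Lifting every sort `o` to `o → o` (which raises orders by at
most one) and η-expanding the rules turns `G'` into a word grammar in which `t u` derives exactly
the words `yield π ++ w` with `t ⇒* π` and `u ⇒* w`. Starting from `S e` thus yields the frontiers
with `e` erased, and the hypothesis on `e` lets `map some` recover the ε-adjusted frontier
language. Since `Br` has order 2, for `n = 0` the rule bodies, which are then plain trees over
`br`, are instead flattened into their sequences of leaves, giving an order-1 grammar.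
-/

section Spine
variable {N T : Type}

def Tm.head : Tm N T → Tm N T
  | .app s _ => s.head
  | t => t

@[simp] theorem Tm.head_appList (s : Tm N T) (ts : List (Tm N T)) :
    (appList s ts).head = s.head := by
  induction ts generalizing s with
  | nil => rfl
  | cons t ts ih => exact ih (.app s t)

theorem appList_concat (s t : Tm N T) (ts : List (Tm N T)) :
    appList s (ts ++ [t]) = .app (appList s ts) t := by
  induction ts generalizing s with
  | nil => rfl
  | cons t' ts ih => exact ih (.app s t')

theorem appList_eq_app_iff {s f x : Tm N T} {ts : List (Tm N T)} :
    appList s ts = .app f x ↔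
      (ts = [] ∧ s = .app f x) ∨ ∃ ts', ts = ts' ++ [x] ∧ appList s ts' = f := by
  rcases List.eq_nil_or_concat ts with rfl | ⟨ts', y, rfl⟩
  · simp [appList]
  · simp [appList_concat, and_comm]

theorem appList_nt_eq_nt_iff {A B : N} {ts : List (Tm N T)} :
    appList (.nt A) ts = .nt B ↔ ts = [] ∧ A = B := by
  rcases List.eq_nil_or_concat ts with rfl | ⟨ts', y, rfl⟩
  · simp [appList]
  · simp [appList_concat]

theorem substL_nil (t : Tm N T) : substL [] t = t := by
  induction t with
  | app s t ihs iht => rw [substL, ihs, iht]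
  | _ => rfl

def appStack {α : Type} (enc : α → Tm N T) (xs : List α) (u : Tm N T) : Tm N T :=
  xs.foldr (fun x v => .app (enc x) v) u

section AppStack
variable {α : Type} (enc : α → Tm N T)

@[simp] theorem appStack_nil (u : Tm N T) : appStack enc [] u = u := rfl

@[simp] theorem appStack_cons (x : α) (xs : List α) (u : Tm N T) :
    appStack enc (x :: xs) u = .app (enc x) (appStack enc xs u) := rfl

theorem appStack_append (xs ys : List α) (u : Tm N T) :
    appStack enc (xs ++ ys) u = appStack enc xs (appStack enc ys u) :=
  List.foldr_append

theorem substL_appStack {σ : List (Tm N T)} (henc : ∀ x, substL σ (enc x) = enc x) (xs : List α)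
    (u : Tm N T) : substL σ (appStack enc xs u) = appStack enc xs (substL σ u) := by
  induction xs with
  | nil => rfl
  | cons x xs ih => simp [substL, henc, ih]

end AppStack
end Spine

theorem List.Forall₂.append_left_inv {α γ : Type*} {R : α → γ → Prop} {l₁ l₂ : List α}
    {l : List γ} (h : List.Forall₂ R (l₁ ++ l₂) l) :
    ∃ m₁ m₂, l = m₁ ++ m₂ ∧ List.Forall₂ R l₁ m₁ ∧ List.Forall₂ R l₂ m₂ := by
  induction l₁ generalizing l with
  | nil => exact ⟨[], l, rfl, .nil, h⟩
  | cons a l₁ ih =>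
    cases h with
    | cons hab h =>
      obtain ⟨m₁, m₂, rfl, h₁, h₂⟩ := ih h
      exact ⟨_ :: m₁, m₂, rfl, .cons hab h₁, h₂⟩

namespace BT
variable {β : Type}

def yield : BT β → List β
  | .e => []
  | .ltr a => [a]
  | .br l r => l.yield ++ r.yield

theorem leaves_ne_nil (π : BT β) : π.leaves ≠ [] := by
  induction π with
  | e | ltr => simp [leaves]
  | br l r ihl _ => simp [leaves, ihl]

theorem eq_e_of_leaves_eq {π : BT β} (h : π.leaves = [none]) : π = .e := by
  cases π with
  | e => rfl
  | ltr => simp [leaves] at h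
  | br l r =>
    rcases List.append_eq_singleton_iff.mp h with ⟨hl, -⟩ | ⟨-, hr⟩
    · exact absurd hl l.leaves_ne_nil
    · exact absurd hr r.leaves_ne_nil

theorem leaves_eq_map_some_yield {π : BT β} (h : none ∉ π.leaves) :
    π.leaves = π.yield.map some := by
  induction π with
  | e => simp [leaves] at h
  | ltr => rfl
  | br l r ihl ihr =>
    simp only [leaves, List.mem_append, not_or] at h
    simp [leaves, yield, ihl h.1, ihr h.2]

end BT

namespace Grammar
variable {β : Type}

section Word
variable {G : Grammar (Option β) wordAr}

inductive DerivesWord (G : Grammar (Option β) wordAr) : Tm G.N (Option β) → List β → Prop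
  | nil : DerivesWord G (.tm none) []
  | cons {s w a} : DerivesWord G s w → DerivesWord G (.app (.tm (some a)) s) (a :: w)
  | step {A ts body w} : body ∈ G.rules A → ts.length = (G.nty A).args.length →
      DerivesWord G (substL ts body) w → DerivesWord G (appList (.nt A) ts) w

theorem DerivesWord.eq_nil {w : List β} (d : G.DerivesWord (.tm none) w) : w = [] := by
  generalize hs : (Tm.tm none : Tm G.N (Option β)) = s at d
  cases d with
  | nil => rfl
  | cons => cases hs
  | step => exact absurd (congrArg Tm.head hs) (by simp [Tm.head])

theorem DerivesWord.app_tm_inv {a : β} {s : Tm G.N (Option β)} {w : List β}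
    (d : G.DerivesWord (.app (.tm (some a)) s) w) : ∃ w', w = a :: w' ∧ G.DerivesWord s w' := by
  generalize hs : Tm.app (.tm (some a)) s = s' at d
  cases d with
  | nil => cases hs
  | cons d => cases hs; exact ⟨_, rfl, d⟩
  | step => exact absurd (congrArg Tm.head hs) (by simp [Tm.head])

theorem derivesWord_nt_iff {A : G.N} (hA : G.nty A = .o) {w : List β} :
    G.DerivesWord (.nt A) w ↔ ∃ body ∈ G.rules A, G.DerivesWord body w := by
  constructor
  · intro d
    generalize hs : (Tm.nt A : Tm G.N (Option β)) = s at d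
    cases d with
    | nil => cases hs
    | cons => cases hs
    | step hb _ d =>
      obtain ⟨rfl, rfl⟩ := appList_nt_eq_nt_iff.mp hs.symm
      exact ⟨_, hb, by rwa [substL_nil] at d⟩
  · rintro ⟨body, hb, d⟩
    exact .step (ts := []) hb (by simp [hA, STy.args]) (by rwa [substL_nil])

theorem DerivesWord.of_red {s s' : Tm G.N (Option β)} (h : Red G s s') {w : List β}
    (d : G.DerivesWord s' w) : G.DerivesWord s w := by
  induction h generalizing w with
  | step hb hl => exact .step hb hl d
  | @ctx a t t' ts₁ ts₂ _ hlen ih =>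
    cases a with
    | none => simp [wordAr] at hlen
    | some b =>
      rcases ts₁ with _ | ⟨_, _⟩ <;> rcases ts₂ with _ | ⟨_, _⟩ <;> simp [wordAr] at hlen <;> try omega
      obtain ⟨w', rfl, d'⟩ := DerivesWord.app_tm_inv (s := t') d
      exact .cons (ih d')

theorem DerivesWord.redStar {s : Tm G.N (Option β)} {w : List β} (d : G.DerivesWord s w) :
    RedStar G s (wordTm w) := by
  induction d with
  | nil => exact .refl
  | @cons _ _ a _ ih =>
    refine .lift (fun u => Tm.app (.tm (some a)) u) (fun u v h => ?_) _ _ ih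
    exact Red.ctx (ts₁ := []) (ts₂ := []) h rfl
  | step hb hl _ ih => exact .head (.step hb hl) ih

theorem derivesWord_iff_redStar {s : Tm G.N (Option β)} {w : List β} :
    G.DerivesWord s w ↔ RedStar G s (wordTm w) := by
  refine ⟨DerivesWord.redStar, fun h => ?_⟩
  induction h using Relation.ReflTransGen.head_induction_on with
  | refl =>
    induction w with
    | nil => exact .nil
    | cons a w ih => exact .cons ih
  | head h _ ih => exact ih.of_red h

/-- Inverting a derivation from a whole stack of pending items, rather than from a single one,
keeps steps that replace the top item by several (such as `Br f g x → f (g x)`) inside a single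
induction on the derivation. -/
theorem DerivesWord.appStack_inv {α : Type} {enc : α → Tm G.N (Option β)} {R : α → BT β → Prop}
    (hltr : ∀ {x a}, enc x = .tm (some a) → R x (.ltr a))
    (hstep : ∀ {X args body x v}, body ∈ G.rules X → args.length = (G.nty X).args.length →
      appList (.nt X) args = .app (enc x) v → ∃ xs, substL args body = appStack enc xs v ∧
        ∀ πs, List.Forall₂ R xs πs → ∃ π, R x π ∧ π.yield = πs.flatMap BT.yield)
    {s : Tm G.N (Option β)} {w : List β} (d : G.DerivesWord s w) :
    ∀ xs u, s = appStack enc xs u → ∃ πs w₂, List.Forall₂ R xs πs ∧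
      w = πs.flatMap BT.yield ++ w₂ ∧ G.DerivesWord u w₂ := by
  induction d with
  | nil =>
    rintro (_ | ⟨x, xs⟩) u h <;> simp only [appStack_nil, appStack_cons] at h
    · subst h; exact ⟨[], [], .nil, rfl, .nil⟩
    · cases h
  | @cons s w a d ih =>
    rintro (_ | ⟨x, xs⟩) u h <;> simp only [appStack_nil, appStack_cons] at h
    · subst h; exact ⟨[], _, .nil, rfl, .cons d⟩
    obtain ⟨hx, rfl⟩ := Tm.app.inj h
    obtain ⟨πs, w₂, hπs, rfl, hu⟩ := ih xs u rfl
    exact ⟨.ltr a :: πs, w₂, .cons (hltr hx.symm) hπs, rfl, hu⟩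
  | step hb hl d ih =>
    rintro (_ | ⟨x, xs⟩) u h <;> simp only [appStack_nil, appStack_cons] at h
    · subst h; exact ⟨[], _, .nil, rfl, .step hb hl d⟩
    obtain ⟨ys, hys, hx⟩ := hstep hb hl h
    obtain ⟨πs, w₂, hπs, rfl, hu⟩ := ih (ys ++ xs) u (by rw [hys, appStack_append])
    obtain ⟨πs₁, πs₂, rfl, h₁, h₂⟩ := hπs.append_left_inv
    obtain ⟨π, hπ, hy⟩ := hx πs₁ h₁
    exact ⟨π :: πs₂, w₂, .cons hπ h₂, by simp [hy], hu⟩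

end Word

section Tree
variable {G : Grammar (TSym β) treeAr}

inductive DerivesTree (G : Grammar (TSym β) treeAr) : Tm G.N (TSym β) → BT β → Prop
  | e : DerivesTree G (.tm .e) .e
  | ltr {a} : DerivesTree G (.tm (.ltr a)) (.ltr a)
  | br {s t l r} : DerivesTree G s l → DerivesTree G t r →
      DerivesTree G (.app (.app (.tm .br) s) t) (.br l r)
  | step {A ts body π} : body ∈ G.rules A → ts.length = (G.nty A).args.length →
      DerivesTree G (substL ts body) π → DerivesTree G (appList (.nt A) ts) π

theorem DerivesTree.br_inv {s t : Tm G.N (TSym β)} {π : BT β}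
    (d : G.DerivesTree (.app (.app (.tm .br) s) t) π) :
    ∃ l r, π = .br l r ∧ G.DerivesTree s l ∧ G.DerivesTree t r := by
  generalize hs : Tm.app (.app (.tm .br) s) t = s' at d
  cases d with
  | e => cases hs
  | ltr => cases hs
  | br dl dr => cases hs; exact ⟨_, _, rfl, dl, dr⟩
  | step => exact absurd (congrArg Tm.head hs) (by simp [Tm.head])

theorem DerivesTree.of_red {s s' : Tm G.N (TSym β)} (h : Red G s s') {π : BT β}
    (d : G.DerivesTree s' π) : G.DerivesTree s π := by
  induction h generalizing π with
  | step hb hl => exact .step hb hl d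
  | @ctx a t t' ts₁ ts₂ _ hlen ih =>
    cases a with
    | e | ltr => simp [treeAr] at hlen
    | br =>
      rcases ts₁ with _ | ⟨x, _ | ⟨_, _⟩⟩ <;> rcases ts₂ with _ | ⟨y, _ | ⟨_, _⟩⟩ <;>
        simp [treeAr] at hlen <;> try omega
      · obtain ⟨l, r, rfl, dl, dr⟩ := DerivesTree.br_inv (s := t') d
        exact .br (ih dl) dr
      · obtain ⟨l, r, rfl, dl, dr⟩ := DerivesTree.br_inv (t := t') d
        exact .br dl (ih dr)

theorem DerivesTree.redStar {s : Tm G.N (TSym β)} {π : BT β} (d : G.DerivesTree s π) :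
    RedStar G s π.toTm := by
  induction d with
  | e | ltr => exact .refl
  | @br s t l r _ _ ihl ihr =>
    refine .trans (.lift (fun u => Tm.app (.app (.tm .br) u) t) (fun u v h => ?_) _ _ ihl)
      (.lift (fun u => Tm.app (.app (.tm .br) l.toTm) u) (fun u v h => ?_) _ _ ihr)
    · exact Red.ctx (ts₁ := []) (ts₂ := [t]) h rfl
    · exact Red.ctx (ts₁ := [l.toTm]) (ts₂ := []) h rfl
  | step hb hl _ ih => exact .head (.step hb hl) ih

theorem derivesTree_iff_redStar {s : Tm G.N (TSym β)} {π : BT β} :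
    G.DerivesTree s π ↔ RedStar G s π.toTm := by
  refine ⟨DerivesTree.redStar, fun h => ?_⟩
  induction h using Relation.ReflTransGen.head_induction_on with
  | refl =>
    induction π with
    | e => exact .e
    | ltr => exact .ltr
    | br l r ihl ihr => exact .br ihl ihr
  | head h _ ih => exact ih.of_red h

end Tree
end Grammar


def Grammar.treeLang {β : Type} (G : Grammar (TSym β) treeAr) : Set (BT β) :=
  { π | RedStar G (.nt G.start) π.toTm }

theorem image_map_some_eq_leafLangE {β : Type} {G' : Grammar (TSym β) treeAr} {L : Set (List β)}
    (hL : L = BT.yield '' G'.treeLang) (he : ∀ w ∈ LeafLangE G', Option.none ∉ w) :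
    List.map some '' L = LeafLangE G' := by
  subst hL
  ext x
  constructor
  · rintro ⟨_, ⟨π, hπ, rfl⟩, rfl⟩
    by_cases h : π.leaves = [none]
    · obtain rfl := BT.eq_e_of_leaves_eq h
      exact .inr ⟨rfl, .e, hπ, rfl⟩
    · have hmem : π.leaves ∈ LeafLangE G' := .inl ⟨⟨π, hπ, rfl⟩, h⟩
      rwa [← BT.leaves_eq_map_some_yield (he _ hmem)]
  · rintro (⟨⟨π, hπ, rfl⟩, h⟩ | ⟨rfl, π, hπ, h⟩)
    · exact ⟨π.yield, ⟨π, hπ, rfl⟩,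
        (BT.leaves_eq_map_some_yield (he _ (.inl ⟨⟨π, hπ, rfl⟩, h⟩))).symm⟩
    · obtain rfl := BT.eq_e_of_leaves_eq h
      exact ⟨[], ⟨.e, hπ, rfl⟩, rfl⟩

def STy.lift : STy → STy
  | .o => .arr .o .o
  | .arr a b => .arr a.lift b.lift

@[simp] theorem STy.args_lift (κ : STy) : κ.lift.args = κ.args.map lift ++ [.o] := by
  induction κ with
  | o => rfl
  | arr a b _ ihb => simp [lift, args, ihb]

theorem STy.ord_lift_le (κ : STy) : κ.lift.ord ≤ κ.ord + 1 := by
  induction κ with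
  | o => simp [lift, ord]
  | arr a b iha ihb => simp only [lift, ord]; omega

theorem STy.eq_o_of_ord_eq_zero {κ : STy} (h : κ.ord = 0) : κ = .o := by
  cases κ with
  | o => rfl
  | arr => simp [ord] at h

/-- The non-terminals `E`, `Br` and `S''` of the word grammar next to those of `G'`. -/
inductive WordNT (N : Type) where
  | orig : N → WordNT N
  | e : WordNT N
  | br : WordNT N
  | start : WordNT N

instance {N : Type} [Finite N] : Finite (WordNT N) :=
  Finite.of_injective
    (fun | .orig A => Sum.inl A | .e => Sum.inr (0 : Fin 3) | .br => .inr 1 | .start => .inr 2)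
    (by rintro (_ | _ | _ | _) (_ | _ | _ | _) h <;> simp_all)

def WordNT.sort {N : Type} (nty : N → STy) : WordNT N → STy
  | .orig A => (nty A).lift
  | .e => STy.o.lift
  | .br => (tyOfArity 2).lift
  | .start => .o

namespace Tm
variable {N β : Type}

def toWord : Tm N (TSym β) → Tm (WordNT N) (Option β)
  | .var i => .var i
  | .nt A => .nt (.orig A)
  | .tm .br => .nt .br
  | .tm .e => .nt .e
  | .tm (.ltr a) => .tm (some a)
  | .app s t => .app s.toWord t.toWord

theorem toWord_appList (s : Tm N (TSym β)) (ts : List (Tm N (TSym β))) :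
    (appList s ts).toWord = appList s.toWord (ts.map toWord) := by
  induction ts generalizing s with
  | nil => rfl
  | cons t ts ih => exact ih (.app s t)

theorem hasTy_toWord {nty : N → STy} {Γ : List STy} {t : Tm N (TSym β)} {κ : STy}
    (h : HasTy treeAr nty Γ t κ) (Δ : List STy) :
    HasTy wordAr (WordNT.sort nty) (Γ.map STy.lift ++ Δ) t.toWord κ.lift := by
  induction h with
  | var hv =>
    refine .var ?_
    rw [List.getElem?_append_left (by simpa using (List.getElem?_eq_some_iff.mp hv).1),
      List.getElem?_map, hv]
    rfl
  | nt => exact .nt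
  | tm =>
    rename_i a
    cases a with
    | br | e => exact .nt
    | ltr => exact .tm
  | app _ _ ih₁ ih₂ => exact .app ih₁ ih₂

theorem substL_toWord {ar : TSym β → Nat} {nty : N → STy} {Γ : List STy} {t : Tm N (TSym β)}
    {κ : STy} (h : HasTy ar nty Γ t κ) {ts : List (Tm N (TSym β))} (hlen : Γ.length ≤ ts.length)
    (us : List (Tm (WordNT N) (Option β))) :
    substL (ts.map toWord ++ us) t.toWord = (substL ts t).toWord := by
  induction h with
  | @var i _ hv =>
    have hi : i < ts.length := (List.getElem?_eq_some_iff.mp hv).1.trans_le hlen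
    simp [toWord, substL, List.getD_eq_getElem?_getD, List.getElem?_append_left, hi]
  | nt => rfl
  | tm => rename_i a; cases a <;> rfl
  | app _ _ ih₁ ih₂ => simp [toWord, substL, ih₁, ih₂]

theorem substL_toWord_app_var {ar : TSym β → Nat} {nty : N → STy} {Γ : List STy}
    {b : Tm N (TSym β)} (hb : HasTy ar nty Γ b .o) {ts : List (Tm N (TSym β))}
    (hlen : ts.length = Γ.length) (u : Tm (WordNT N) (Option β)) :
    substL (ts.map toWord ++ [u]) (.app b.toWord (.var Γ.length)) =
      .app (substL ts b).toWord u := by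
  simp [substL, substL_toWord hb hlen.ge, ← hlen, List.getD_eq_getElem?_getD]

theorem toWord_eq_appList_nt {t : Tm N (TSym β)} {X : WordNT N}
    {args : List (Tm (WordNT N) (Option β))} (h : t.toWord = appList (.nt X) args) :
    ∃ hd ts, t = appList hd ts ∧ hd.toWord = .nt X ∧ args = ts.map toWord := by
  induction t generalizing args with
  | app s x ihs _ =>
    rcases appList_eq_app_iff.mp h.symm with ⟨-, hX⟩ | ⟨args, rfl, hs⟩
    · cases hX
    · obtain ⟨hd, ts, rfl, hhd, rfl⟩ := ihs hs.symm
      exact ⟨hd, ts ++ [x], by rw [appList_concat], hhd, by simp⟩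
  | _ =>
    rcases List.eq_nil_or_concat args with rfl | ⟨args, x, rfl⟩
    · exact ⟨_, [], rfl, h, rfl⟩
    · rw [List.concat_eq_append, appList_concat] at h
      first | cases h | (rename_i a; cases a <;> cases h)

end Tm

abbrev Grammar.toWordGrammar {β : Type} (G' : Grammar (TSym β) treeAr) :
    Grammar (Option β) wordAr where
  N := WordNT G'.N
  nFin := have := G'.nFin; inferInstance
  nty := WordNT.sort G'.nty
  start := .start
  startO := rfl
  rules
    | .orig A => (G'.rules A).map fun b => .app b.toWord (.var (G'.nty A).args.length)
    | .e => [.var 0]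
    | .br => [.app (.var 0) (.app (.var 1) (.var 2))]
    | .start => [.app (.nt (.orig G'.start)) (.tm none)]
  rulesTy := by
    rintro (A | _ | _ | _) t ht <;> simp only [List.mem_map, List.mem_singleton] at ht
    · obtain ⟨b, hb, rfl⟩ := ht
      simp only [WordNT.sort, STy.args_lift]
      exact .app (Tm.hasTy_toWord (G'.rulesTy A b hb) [.o]) (.var (by simp))
    all_goals subst ht
    · exact .var rfl
    · exact .app (.var rfl) (.app (.var rfl) (.var rfl))
    · refine .app ?_ .tm
      have h := HasTy.nt (T := Option β) (ar := wordAr) (nty := WordNT.sort G'.nty) (Γ := [])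
        (A := .orig G'.start)
      rwa [WordNT.sort, G'.startO] at h

namespace Grammar
variable {β : Type} {G' : Grammar (TSym β) treeAr}

theorem orderLE_toWordGrammar {n : Nat} (hn : 1 ≤ n) (hG' : G'.orderLE n) :
    G'.toWordGrammar.orderLE (n + 1) := by
  rintro (A | _ | _ | _)
  · exact (STy.ord_lift_le _).trans (Nat.add_le_add_right (hG' A) 1)
  all_goals simp [WordNT.sort, STy.lift, tyOfArity, STy.ord]; try omega

theorem DerivesTree.derivesWord_toWordGrammar {t : Tm G'.N (TSym β)} {π : BT β}
    (hπ : G'.DerivesTree t π) {u : Tm (WordNT G'.N) (Option β)} {w : List β}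
    (hu : G'.toWordGrammar.DerivesWord u w) :
    G'.toWordGrammar.DerivesWord (.app t.toWord u) (π.yield ++ w) := by
  induction hπ generalizing u w with
  | e => exact .step (G := G'.toWordGrammar) (A := .e) (ts := [u]) (body := .var 0) (by simp) rfl hu
  | ltr => exact .cons hu
  | br _ _ ihl ihr =>
    rw [BT.yield, List.append_assoc]
    exact .step (G := G'.toWordGrammar) (A := .br) (ts := [_, _, u])
      (body := .app (.var 0) (.app (.var 1) (.var 2))) (by simp) rfl (ihl (ihr hu))
  | @step A ts b _ hb hl _ ih =>
    rw [Tm.toWord_appList, ← appList_concat]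
    refine .step (List.mem_map_of_mem hb) (by simp [toWordGrammar, WordNT.sort, hl]) ?_
    rw [Tm.substL_toWord_app_var (G'.rulesTy A b hb) hl]
    exact ih hu

theorem step_app_toWord_inv {X : WordNT G'.N} {args : List (Tm (WordNT G'.N) (Option β))}
    {body : Tm (WordNT G'.N) (Option β)} {t : Tm G'.N (TSym β)} {v : Tm (WordNT G'.N) (Option β)}
    (hb : body ∈ G'.toWordGrammar.rules X) (hl : args.length = (G'.toWordGrammar.nty X).args.length)
    (h : appList (.nt X) args = .app t.toWord v) :
    ∃ ts, substL args body = appStack Tm.toWord ts v ∧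
      ∀ πs, List.Forall₂ G'.DerivesTree ts πs → ∃ π, G'.DerivesTree t π ∧
        π.yield = πs.flatMap BT.yield := by
  rcases appList_eq_app_iff.mp h with ⟨-, hX⟩ | ⟨args, rfl, hX⟩
  · cases hX
  obtain ⟨hd, tts, rfl, hhd, rfl⟩ := Tm.toWord_eq_appList_nt hX.symm
  cases hd with
  | nt A =>
    cases hhd
    obtain ⟨b, hbA, rfl⟩ := List.mem_map.mp hb
    replace hl : tts.length = (G'.nty A).args.length := by simpa [WordNT.sort] using hl
    refine ⟨[substL tts b], Tm.substL_toWord_app_var (G'.rulesTy A b hbA) hl v, ?_⟩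
    rintro _ (_ | ⟨hπ, _ | _⟩)
    exact ⟨_, .step hbA hl hπ, by simp⟩
  | tm a =>
    cases a with
    | br =>
      cases hhd
      obtain rfl := List.mem_singleton.mp hb
      rcases tts with _ | ⟨t₁, _ | ⟨t₂, _ | ⟨_, _⟩⟩⟩ <;>
        simp [WordNT.sort, tyOfArity, STy.lift, STy.args] at hl
      refine ⟨[t₁, t₂], rfl, ?_⟩
      rintro _ (_ | ⟨hπ₁, _ | ⟨hπ₂, _ | _⟩⟩)
      exact ⟨_, .br hπ₁ hπ₂, by simp [BT.yield]⟩
    | e =>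
      cases hhd
      obtain rfl := List.mem_singleton.mp hb
      obtain rfl : tts = [] := by simpa [WordNT.sort, STy.lift, STy.args] using hl
      refine ⟨[], rfl, ?_⟩
      rintro _ (_ | _)
      exact ⟨.e, .e, rfl⟩
    | ltr => cases hhd
  | _ => cases hhd

theorem ltr_of_toWord_eq_tm {t : Tm G'.N (TSym β)} {a : β} (h : t.toWord = .tm (some a)) :
    G'.DerivesTree t (.ltr a) := by
  cases t with
  | tm a' => cases a' <;> cases h; exact .ltr
  | _ => cases h

theorem wordLang_toWordGrammar : WordLang G'.toWordGrammar = BT.yield '' G'.treeLang := by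
  ext w
  simp only [WordLang, treeLang, Set.mem_ofPred_eq, Set.mem_image, ← derivesTree_iff_redStar]
  rw [← derivesWord_iff_redStar (G := G'.toWordGrammar), derivesWord_nt_iff rfl]
  constructor
  · rintro ⟨body, hb, d⟩
    obtain rfl := List.mem_singleton.mp hb
    obtain ⟨_, w₂, _ | ⟨hπ, _ | _⟩, rfl, hu⟩ :=
      d.appStack_inv (enc := Tm.toWord) ltr_of_toWord_eq_tm step_app_toWord_inv [.nt G'.start]
        (.tm none) rfl
    exact ⟨_, hπ, by simp [hu.eq_nil]⟩
  · rintro ⟨π, hπ, rfl⟩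
    exact ⟨_, List.mem_singleton_self _,
      π.yield.append_nil ▸ hπ.derivesWord_toWordGrammar .nil⟩

end Grammar

namespace Tm
variable {N β : Type}

inductive IsTree : Tm N (TSym β) → Prop
  | e : IsTree (.tm .e)
  | ltr {a} : IsTree (.tm (.ltr a))
  | nt {A} : IsTree (.nt A)
  | br {s t} : IsTree s → IsTree t → IsTree (.app (.app (.tm .br) s) t)

def TreeShape : Tm N (TSym β) → STy → Prop
  | t, .o => t.IsTree
  | t, .arr .o .o => ∃ s, s.IsTree ∧ t = .app (.tm .br) s
  | t, .arr .o (.arr .o .o) => t = .tm .br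
  | _, _ => False

theorem treeShape_of_hasTy {nty : N → STy} (h0 : ∀ A, nty A = .o) {t : Tm N (TSym β)} {κ : STy}
    (h : HasTy treeAr nty [] t κ) : t.TreeShape κ := by
  induction h with
  | var hv => simp at hv
  | nt => rename_i A; rw [h0 A]; exact .nt
  | tm =>
    rename_i a
    cases a with
    | br => rfl
    | e => exact .e
    | ltr => exact .ltr
  | @app s t κ₁ κ₂ _ _ ih₁ ih₂ =>
    rcases κ₁ with _ | ⟨_, _⟩ <;> [skip; exact ih₁.elim]
    rcases κ₂ with _ | ⟨_ | ⟨_, _⟩, _ | ⟨_, _⟩⟩ <;> try exact ih₁.elim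
    · obtain ⟨s, hs, rfl⟩ := ih₁
      exact .br hs ih₂
    · cases ih₁
      exact ⟨t, ih₂, rfl⟩

theorem isTree_of_hasTy {nty : N → STy} (h0 : ∀ A, nty A = .o) {t : Tm N (TSym β)}
    (h : HasTy treeAr nty [] t .o) : t.IsTree :=
  treeShape_of_hasTy h0 h

def leafAtoms : Tm N (TSym β) → List (N ⊕ β)
  | .app (.app (.tm .br) s) t => s.leafAtoms ++ t.leafAtoms
  | .nt A => [.inl A]
  | .tm (.ltr a) => [.inr a]
  | _ => [] -- `e`, and junk on terms that are not trees

end Tm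

section Flat
variable {N β : Type}

def atomTree : N ⊕ β → Tm N (TSym β) := Sum.elim .nt fun a => .tm (.ltr a)

def atomWord : N ⊕ β → Tm (Option N) (Option β) :=
  Sum.elim (fun A => .nt (some A)) fun a => .tm (some a)

def flatSort : Option N → STy
  | none => .o
  | some _ => STy.o.lift

theorem substL_atomWord (σ : List (Tm (Option N) (Option β))) (x : N ⊕ β) :
    substL σ (atomWord x) = atomWord x := by
  rcases x with _ | _ <;> rfl

theorem hasTy_appStack_atomWord {Γ : List STy} (as : List (N ⊕ β)) {u : Tm (Option N) (Option β)}
    (hu : HasTy wordAr flatSort Γ u .o) : HasTy wordAr flatSort Γ (appStack atomWord as u) .o := by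
  induction as with
  | nil => exact hu
  | cons x as ih => rcases x with _ | _ <;> exact .app (by first | exact .nt | exact .tm) ih

end Flat

abbrev Grammar.toFlatWordGrammar {β : Type} (G' : Grammar (TSym β) treeAr) :
    Grammar (Option β) wordAr where
  N := Option G'.N
  nFin := have := G'.nFin; inferInstance
  nty := flatSort
  start := none
  startO := rfl
  rules
    | none => [appStack atomWord [.inl G'.start] (.tm none)]
    | some A => (G'.rules A).map fun b => appStack atomWord b.leafAtoms (.var 0)
  rulesTy := by
    rintro (_ | A) t ht <;> simp only [List.mem_map, List.mem_singleton] at ht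
    · exact ht ▸ hasTy_appStack_atomWord _ .tm
    · obtain ⟨b, -, rfl⟩ := ht
      exact hasTy_appStack_atomWord _ (.var rfl)

namespace Grammar
variable {β : Type} {G' : Grammar (TSym β) treeAr}

theorem orderLE_toFlatWordGrammar (n : Nat) : G'.toFlatWordGrammar.orderLE (n + 1) := by
  rintro (_ | _) <;> simp [flatSort, STy.lift, STy.ord]

theorem DerivesTree.derivesWord_toFlatWordGrammar (h0 : ∀ A, G'.nty A = .o)
    {t : Tm G'.N (TSym β)} {π : BT β} (hπ : G'.DerivesTree t π)
    {u : Tm (Option G'.N) (Option β)} {w : List β} (hu : G'.toFlatWordGrammar.DerivesWord u w) :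
    G'.toFlatWordGrammar.DerivesWord (appStack atomWord t.leafAtoms u) (π.yield ++ w) := by
  induction hπ generalizing u w with
  | e => exact hu
  | ltr => exact .cons hu
  | br _ _ ihl ihr =>
    rw [Tm.leafAtoms, appStack_append, BT.yield, List.append_assoc]
    exact ihl (ihr hu)
  | @step A ts b _ hb hl _ ih =>
    obtain rfl : ts = [] := by simpa [h0 A, STy.args] using hl
    refine .step (G := G'.toFlatWordGrammar) (A := some A) (ts := [u]) (List.mem_map_of_mem hb)
      rfl ?_
    rw [substL_appStack _ (substL_atomWord _)]
    simpa [substL, substL_nil] using ih hu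

theorem derivesTree_of_forall₂_leafAtoms {t : Tm G'.N (TSym β)} (ht : t.IsTree)
    {πs : List (BT β)}
    (h : List.Forall₂ (fun x π => G'.DerivesTree (atomTree x) π) t.leafAtoms πs) :
    ∃ π, G'.DerivesTree t π ∧ π.yield = πs.flatMap BT.yield := by
  induction ht generalizing πs with
  | e => cases h; exact ⟨.e, .e, rfl⟩
  | ltr | nt => rcases h with _ | ⟨hπ, _ | _⟩; exact ⟨_, hπ, by simp⟩
  | br _ _ ihs iht =>
    obtain ⟨πs₁, πs₂, rfl, h₁, h₂⟩ := List.Forall₂.append_left_inv h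
    obtain ⟨π₁, hπ₁, hy₁⟩ := ihs h₁
    obtain ⟨π₂, hπ₂, hy₂⟩ := iht h₂
    exact ⟨.br π₁ π₂, .br hπ₁ hπ₂, by simp [BT.yield, hy₁, hy₂]⟩

theorem step_app_atomWord_inv (h0 : ∀ A, G'.nty A = .o) {X : Option G'.N}
    {args : List (Tm (Option G'.N) (Option β))} {body : Tm (Option G'.N) (Option β)}
    {x : G'.N ⊕ β} {v : Tm (Option G'.N) (Option β)} (hb : body ∈ G'.toFlatWordGrammar.rules X)
    (h : appList (.nt X) args = .app (atomWord x) v) :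
    ∃ as, substL args body = appStack atomWord as v ∧
      ∀ πs, List.Forall₂ (fun x π => G'.DerivesTree (atomTree x) π) as πs →
        ∃ π, G'.DerivesTree (atomTree x) π ∧ π.yield = πs.flatMap BT.yield := by
  rcases appList_eq_app_iff.mp h with ⟨-, hX⟩ | ⟨args, rfl, hX⟩
  · cases hX
  rcases x with A | a
  · obtain ⟨rfl, rfl⟩ := appList_nt_eq_nt_iff.mp hX
    obtain ⟨b, hbA, rfl⟩ := List.mem_map.mp hb
    refine ⟨b.leafAtoms, by simp [substL_appStack _ (substL_atomWord _), substL], fun πs hπs => ?_⟩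
    have hbTree := Tm.isTree_of_hasTy h0 (by simpa [h0 A, STy.args] using G'.rulesTy A b hbA)
    obtain ⟨π, hπ, hy⟩ := derivesTree_of_forall₂_leafAtoms hbTree hπs
    exact ⟨π, .step (ts := []) hbA (by simp [h0 A, STy.args]) (by rwa [substL_nil]), hy⟩
  · exact absurd (congrArg Tm.head hX) (by simp [Tm.head, atomWord])

theorem ltr_of_atomWord_eq_tm {x : G'.N ⊕ β} {a : β} (h : atomWord x = .tm (some a)) :
    G'.DerivesTree (atomTree x) (.ltr a) := by
  rcases x with _ | _ <;> cases h
  exact .ltr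

theorem wordLang_toFlatWordGrammar (h0 : ∀ A, G'.nty A = .o) :
    WordLang G'.toFlatWordGrammar = BT.yield '' G'.treeLang := by
  ext w
  simp only [WordLang, treeLang, Set.mem_ofPred_eq, Set.mem_image, ← derivesTree_iff_redStar]
  rw [← derivesWord_iff_redStar (G := G'.toFlatWordGrammar), derivesWord_nt_iff rfl]
  constructor
  · rintro ⟨body, hb, d⟩
    obtain rfl := List.mem_singleton.mp hb
    obtain ⟨_, w₂, _ | ⟨hπ, _ | _⟩, rfl, hu⟩ :=
      d.appStack_inv (enc := atomWord) ltr_of_atomWord_eq_tm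
        (fun hb _ h => step_app_atomWord_inv h0 hb h) [.inl G'.start] (.tm none) rfl
    exact ⟨_, hπ, by simp [hu.eq_nil]⟩
  · rintro ⟨π, hπ, rfl⟩
    exact ⟨_, List.mem_singleton_self _,
      π.yield.append_nil ▸ hπ.derivesWord_toFlatWordGrammar h0 .nil⟩

end Grammar

/-- Converse of the main theorem: for any tree grammar G' of order n such that
    no word of its ε-adjusted frontier language contains the symbol e, there is
    a word grammar G of order at most n+1 with W(G) = L_leaf^ε(G'). -/
theorem stmt4 {β : Type} (n : Nat) (G' : Grammar (TSym β) treeAr)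
    (hG' : G'.orderLE n)
    (he : ∀ w ∈ LeafLangE G', Option.none ∉ w) :
    ∃ G : Grammar (Option β) wordAr, G.orderLE (n + 1) ∧
      (List.map Option.some) '' (WordLang G) = LeafLangE G' := by
  rcases Nat.eq_zero_or_pos n with rfl | hn
  · have h0 (A : G'.N) : G'.nty A = .o := STy.eq_o_of_ord_eq_zero (Nat.le_zero.mp (hG' A))
    exact ⟨G'.toFlatWordGrammar, Grammar.orderLE_toFlatWordGrammar 0,
      image_map_some_eq_leafLangE (Grammar.wordLang_toFlatWordGrammar h0) he⟩
  · exact ⟨G'.toWordGrammar, Grammar.orderLE_toWordGrammar hn hG',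
      image_map_some_eq_leafLangE Grammar.wordLang_toWordGrammar he⟩
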